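/- (Exactness of the DWR error representation for quadratic functionals.) Let Y be a real normed vector space and L : Y → ℝ a three times continuously (Fréchet) differentiable functional whose third Fréchet derivative vanishes identically, i.e. L'''(y)(φ,ψ,χ) = 0 for all y, φ, ψ, χ ∈ Y. Let Y₂ ⊆ Y₁ ⊆ Y be linear subspaces, let y₁ ∈ Y₁ satisfy L'(y₁)(δy₁) = 0 for all δy₁ ∈ Y₁, and let y₂ ∈ Y₂ satisfy L'(y₂)(δy₂) = 0 for all δy₂ ∈ Y₂. Then for every ỹ₂ ∈ Y₂ the error representation is exact: L(y₁) − L(y₂) = (1/2)·L'(y₂)(y₁ − ỹ₂). -/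

import Mathlib

/-!
Restrict `L` to the segment `g t = L (y₂ + t • (y₁ - y₂))`. Since `L''' = 0`, also `g''' = 0`, so
`g` is a quadratic polynomial and the trapezoidal rule `g 1 - g 0 = (g' 0 + g' 1) / 2` is exact.
Stationarity on `Y₁` kills `g' 1 = L'(y₁)(y₁ - y₂)`, and stationarity on `Y₂` lets `y₂` be replaced
by any `ỹ₂ ∈ Y₂` in `g' 0 = L'(y₂)(y₁ - y₂)`.
-/

open ContinuousLinearMap in
theorem iteratedDeriv_comp_add_smul {𝕜 E F : Type*} [NontriviallyNormedField 𝕜]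
    [NormedAddCommGroup E] [NormedSpace 𝕜 E] [NormedAddCommGroup F] [NormedSpace 𝕜 F]
    {n : WithTop ℕ∞} {L : E → F} (hL : ContDiff 𝕜 n L) (x v : E) (t : 𝕜) {i : ℕ} (hi : i ≤ n) :
    iteratedDeriv i (fun t => L (x + t • v)) t = iteratedFDeriv 𝕜 i L (x + t • v) fun _ => v := by
  have hline : (fun t : 𝕜 => L (x + t • v)) = (fun z => L (x + z)) ∘ toSpanSingleton 𝕜 v := rfl
  have hshift : ContDiff 𝕜 n fun z => L (x + z) := hL.comp (contDiff_const.add contDiff_id)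
  rw [iteratedDeriv_eq_iteratedFDeriv, hline,
    (toSpanSingleton 𝕜 v).iteratedFDeriv_comp_right hshift t hi,
    ContinuousMultilinearMap.compContinuousLinearMap_apply, iteratedFDeriv_comp_add_left]
  simp

theorem eq_add_smul_of_forall_hasDerivAt_const {E : Type*} [NormedAddCommGroup E]
    [NormedSpace ℝ E] {f : ℝ → E} {c : E} (hf : ∀ t, HasDerivAt f c t) (a t : ℝ) :
    f t = f a + (t - a) • c := by
  have hconst : ∀ s, HasDerivAt (fun s => f s - s • c) 0 s := fun s => by
    simpa using (hf s).fun_sub ((hasDerivAt_id s).smul_const c)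
  have hends := is_const_of_deriv_eq_zero (fun s => (hconst s).differentiableAt)
    (fun s => (hconst s).deriv) t a
  rw [sub_smul, ← sub_eq_iff_eq_add']
  exact sub_eq_sub_iff_sub_eq_sub.mp hends

theorem sub_eq_trapezoid_of_hasDerivAt_const {g g' : ℝ → ℝ} {c : ℝ}
    (hg : ∀ t, HasDerivAt g (g' t) t) (hg' : ∀ t, HasDerivAt g' c t) (a b : ℝ) :
    g b - g a = (b - a) * (g' a + g' b) / 2 := by
  have hconst : ∀ t, HasDerivAt (fun t => g t - (t - a) * (g' a + g' t) / 2) 0 t := by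
    intro t
    have := (hg t).fun_sub ((((hasDerivAt_id t).sub_const a).fun_mul
      ((hg' t).const_add (g' a))).div_const 2)
    refine this.congr_deriv ?_
    rw [eq_add_smul_of_forall_hasDerivAt_const hg' a t, smul_eq_mul, id]
    ring
  have hends := is_const_of_deriv_eq_zero (fun s => (hconst s).differentiableAt)
    (fun s => (hconst s).deriv) b a
  simp only [sub_self, zero_mul, zero_div, sub_zero] at hends
  linarith

theorem sub_eq_trapezoid_of_iteratedDeriv_three_eq_zero {g : ℝ → ℝ} (hg : ContDiff ℝ 3 g)
    (h3 : ∀ t, iteratedDeriv 3 g t = 0) (a b : ℝ) :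
    g b - g a = (b - a) * (deriv g a + deriv g b) / 2 := by
  have hg₁ : Differentiable ℝ g := hg.differentiable (by norm_num)
  have hg₂ : Differentiable ℝ (deriv g) := by
    simpa [iteratedDeriv_one] using hg.differentiable_iteratedDeriv 1 (by norm_num)
  have hg₃ : Differentiable ℝ (deriv (deriv g)) := by
    simpa [iteratedDeriv_succ, iteratedDeriv_one] using
      hg.differentiable_iteratedDeriv 2 (by norm_num)
  have hconst : ∀ t, deriv (deriv g) t = deriv (deriv g) 0 := fun t =>
    is_const_of_deriv_eq_zero hg₃ (fun s => by
      simpa [iteratedDeriv_succ, iteratedDeriv_one] using h3 s) t 0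
  refine sub_eq_trapezoid_of_hasDerivAt_const (c := deriv (deriv g) 0)
    (fun t => (hg₁ t).hasDerivAt) (fun t => ?_) a b
  rw [← hconst t]
  exact (hg₂ t).hasDerivAt

/-- Exactness of the DWR error representation for quadratic functionals:
if the third Fréchet derivative of a `C³` functional `L : Y → ℝ` vanishes
identically, then in the nested-subspace setting the error representation is
exact: `L(y₁) − L(y₂) = (1/2) L'(y₂)(y₁ − ỹ₂)` for every `ỹ₂ ∈ Y₂`. -/
theorem exact_error_representation_quadratic
    {Y : Type*} [NormedAddCommGroup Y] [NormedSpace ℝ Y]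
    (L : Y → ℝ) (hL : ContDiff ℝ 3 L)
    (hthird : ∀ y φ ψ χ : Y, (iteratedFDeriv ℝ 3 L y) ![φ, ψ, χ] = 0)
    (Y₁ Y₂ : Submodule ℝ Y) (hsub : Y₂ ≤ Y₁)
    (y₁ : Y) (hy₁ : y₁ ∈ Y₁)
    (y₂ : Y) (hy₂ : y₂ ∈ Y₂)
    (hstat₁ : ∀ δ ∈ Y₁, (fderiv ℝ L y₁) δ = 0)
    (hstat₂ : ∀ δ ∈ Y₂, (fderiv ℝ L y₂) δ = 0) :
    ∀ ytil₂ ∈ Y₂,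
      L y₁ - L y₂ = (1/2) * (fderiv ℝ L y₂) (y₁ - ytil₂) := by
  intro ytil₂ hytil₂
  set e := y₁ - y₂
  have hline_one : y₂ + e = y₁ := add_sub_cancel y₂ y₁
  set g : ℝ → ℝ := fun t => L (y₂ + t • e)
  have hg : ContDiff ℝ 3 g := hL.comp (contDiff_const.add (contDiff_id.smul contDiff_const))
  have hg₃ : ∀ t, iteratedDeriv 3 g t = 0 := fun t => by
    rw [iteratedDeriv_comp_add_smul hL y₂ e t le_rfl]
    convert hthird (y₂ + t • e) e e e using 2
    funext i
    fin_cases i <;> rfl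
  have hg₁ : ∀ t, deriv g t = fderiv ℝ L (y₂ + t • e) e := fun t => by
    rw [← iteratedDeriv_one, iteratedDeriv_comp_add_smul hL y₂ e t (by norm_num),
      iteratedFDeriv_one_apply]
  have hy₁e : fderiv ℝ L y₁ e = 0 := hstat₁ e (Y₁.sub_mem hy₁ (hsub hy₂))
  have hy₂e : fderiv ℝ L y₂ (y₁ - ytil₂) = fderiv ℝ L y₂ e := by
    rw [← sub_add_sub_cancel y₁ y₂ ytil₂, map_add, hstat₂ _ (Y₂.sub_mem hy₂ hytil₂),
      add_zero]
  have htrap := sub_eq_trapezoid_of_iteratedDeriv_three_eq_zero hg hg₃ 0 1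
  simp only [g, hg₁, zero_smul, one_smul, add_zero, hline_one, hy₁e] at htrap
  rw [hy₂e, htrap]
  ring
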